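/- arXiv:1903.07886 — 8 statements merged into one kernel-verified Lean document; each statement's English description precedes it below -/
import Mathlib

section
/- Let C be an additive subgroup of Z2^α × Z4^β (a Z2Z4-additive code) with C ∩ C⊥ = {0}. Then every vector w in Z2^α × Z4^β can be written uniquely as w1 + w2 with w1 ∈ C and w2 ∈ C⊥. -/
open Finset

/-- The ambient mixed alphabet space `Z2^α × Z4^β`. -/
abbrev Amb (α β : ℕ) := (Fin α → ZMod 2) × (Fin β → ZMod 4)

/-- The binary space `Z2^{α+2β}`, represented as `Z2^α × Z2^β × Z2^β`
(binary part, first Gray bits, second Gray bits). -/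
abbrev Bin (α β : ℕ) := (Fin α → ZMod 2) × (Fin β → ZMod 2) × (Fin β → ZMod 2)

/-- The `Z4`-valued inner product `[u,v] = 2·Σ u_i v_i + Σ u'_j v'_j`. -/
def zinner {α β : ℕ} (u v : Amb α β) : ZMod 4 :=
  2 * ∑ i, ((u.1 i).val : ZMod 4) * ((v.1 i).val : ZMod 4) + ∑ j, u.2 j * v.2 j

/-- The dual of a subset of the mixed ambient space. -/
def zdual {α β : ℕ} (C : Set (Amb α β)) : Set (Amb α β) :=
  {v | ∀ u ∈ C, zinner u v = 0}

/-- The vector `2u*v = (0 | 2u'*v')` (componentwise product; doubling kills the binary part). -/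
def star2 {α β : ℕ} (u v : Amb α β) : Amb α β :=
  (0, fun j => 2 * u.2 j * v.2 j)

/-- The usual Gray map `Z4 → Z2²`. -/
def gray (x : ZMod 4) : ZMod 2 × ZMod 2 :=
  match x.val with
  | 0 => (0, 0)
  | 1 => (0, 1)
  | 2 => (1, 1)
  | _ => (1, 0)

/-- The extended Gray map `Φ : Z2^α × Z4^β → Z2^{α+2β}`. -/
def Phi {α β : ℕ} (u : Amb α β) : Bin α β :=
  (u.1, fun j => (gray (u.2 j)).1, fun j => (gray (u.2 j)).2)

/-- The standard binary inner product on `Z2^{α+2β}`. -/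
def binner {α β : ℕ} (x y : Bin α β) : ZMod 2 :=
  ∑ i, x.1 i * y.1 i + ∑ j, x.2.1 j * y.2.1 j + ∑ j, x.2.2 j * y.2.2 j

/-- The dual of a subset of `Z2^{α+2β}`. -/
def bdual {α β : ℕ} (S : Set (Bin α β)) : Set (Bin α β) :=
  {y | ∀ x ∈ S, binner x y = 0}

/-- A subset of `Z2^{α+2β}` is a linear binary code if it is a linear subspace. -/
def IsLinear {α β : ℕ} (S : Set (Bin α β)) : Prop :=
  ∃ M : Submodule (ZMod 2) (Bin α β), ↑M = S

/-- The set `D_C = {2u*v : u ∈ C, v ∈ C⊥}`. -/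
def DC {α β : ℕ} (C : Set (Amb α β)) : Set (Amb α β) :=
  {x | ∃ u ∈ C, ∃ v ∈ zdual C, x = star2 u v}

/-- The standard binary inner product on `Z2^n`. -/
def binner2 {n : ℕ} (u v : Fin n → ZMod 2) : ZMod 2 := ∑ i, u i * v i

/-- The dual of a subset of `Z2^n`. -/
def bdual2 {n : ℕ} (C : Set (Fin n → ZMod 2)) : Set (Fin n → ZMod 2) :=
  {v | ∀ u ∈ C, binner2 u v = 0}


lemma zinner_add_right {α β : ℕ} (u v w : Amb α β) :
    zinner u (v + w) = zinner u v + zinner u w := by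
  have key : ∀ a x y : ZMod 2, (2:ZMod 4) * ((a.val : ZMod 4) * (((x+y).val : ZMod 4)))
      = 2 * ((a.val:ZMod 4) * (x.val:ZMod 4)) + 2 * ((a.val:ZMod 4)*(y.val:ZMod 4)) := by decide
  simp only [zinner, Prod.fst_add, Prod.snd_add, Pi.add_apply, mul_sum, mul_add]
  rw [Finset.sum_congr rfl (fun i _ => key (u.1 i) (v.1 i) (w.1 i)), sum_add_distrib,
    sum_add_distrib]
  abel

lemma zinner_comm {α β : ℕ} (u v : Amb α β) : zinner u v = zinner v u := by
  simp only [zinner]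
  congr 1
  · congr 1; exact Finset.sum_congr rfl fun i _ => mul_comm _ _
  · exact Finset.sum_congr rfl fun j _ => mul_comm _ _

lemma zinner_zero_right {α β : ℕ} (u : Amb α β) : zinner u 0 = 0 := by
  simp [zinner]

lemma zinner_zero_left {α β : ℕ} (u : Amb α β) : zinner 0 u = 0 := by
  rw [zinner_comm]; exact zinner_zero_right u

lemma zinner_add_left {α β : ℕ} (u v w : Amb α β) :
    zinner (u + v) w = zinner u w + zinner v w := by
  rw [zinner_comm, zinner_add_right, zinner_comm w u, zinner_comm w v]

lemma zinner_neg_right {α β : ℕ} (u v : Amb α β) : zinner u (-v) = - zinner u v := by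
  have := zinner_add_right u v (-v)
  rw [add_neg_cancel, zinner_zero_right] at this
  linear_combination -this

lemma zinner_nondeg {α β : ℕ} (u : Amb α β) (h : ∀ w, zinner u w = 0) : u = 0 := by
  have h2 : ∀ x : ZMod 2, (2:ZMod 4) * ((x.val : ZMod 4) * (((1:ZMod 2).val : ZMod 4))) = 0
      → x = 0 := by decide
  ext i
  · have := h (Pi.single i 1, 0)
    simp only [zinner, Pi.zero_apply, mul_zero, sum_const_zero, add_zero, Pi.single_apply] at this
    rw [Finset.sum_eq_single i (fun b _ hb => by simp [hb]) (by simp), if_pos rfl] at this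
    exact h2 _ this
  · have := h (0, Pi.single i 1)
    simp only [zinner, Pi.zero_apply, ZMod.val_zero, Nat.cast_zero, zero_mul, mul_zero,
      sum_const_zero, zero_add, Pi.single_apply] at this
    rw [Finset.sum_eq_single i (fun b _ hb => by simp [hb]) (by simp), if_pos rfl,
      mul_one] at this
    exact this

/-- `zdual` of a subgroup is a subgroup. -/
def zdualSub {α β : ℕ} (C : AddSubgroup (Amb α β)) : AddSubgroup (Amb α β) where
  carrier := zdual (C : Set (Amb α β))
  zero_mem' := fun u _ => zinner_zero_right u
  add_mem' := fun {a b} ha hb u hu => by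
    rw [zinner_add_right, ha u hu, hb u hu, add_zero]
  neg_mem' := fun {a} ha u hu => by rw [zinner_neg_right, ha u hu, neg_zero]

/-- Right multiplication hom. -/
def rHom {α β : ℕ} (u : Amb α β) : Amb α β →+ ZMod 4 where
  toFun w := zinner u w
  map_zero' := zinner_zero_right u
  map_add' v w := zinner_add_right u v w

/-- Left hom restricted to the subgroup. -/
def lHom {α β : ℕ} (C : AddSubgroup (Amb α β)) (w : Amb α β) : C →+ ZMod 4 where
  toFun c := zinner (c : Amb α β) w
  map_zero' := zinner_zero_left w
  map_add' a b := by
    push_cast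
    exact zinner_add_left _ _ _

open ZMod in
lemma card_mul_card {α β : ℕ} (C : AddSubgroup (Amb α β)) :
    Nat.card C * Nat.card (zdualSub C) = Nat.card (Amb α β) := by
  classical
  simp only [Nat.card_eq_fintype_card]
  set ψ : AddChar (ZMod 4) ℂ := ZMod.stdAddChar with hψ
  have hψinj : Function.Injective ψ := ZMod.injective_stdAddChar
  have S1 : ∑ w : Amb α β, ∑ u : C, ψ (zinner (u : Amb α β) w)
      = (Fintype.card (Amb α β) : ℂ) := by
    rw [Finset.sum_comm]
    have inner : ∀ u : C, ∑ w : Amb α β, ψ (zinner (u : Amb α β) w)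
        = if (u : Amb α β) = 0 then (Fintype.card (Amb α β) : ℂ) else 0 := by
      intro u
      have : ∑ w : Amb α β, ψ (zinner (u : Amb α β) w)
          = ∑ w : Amb α β, (ψ.compAddMonoidHom (rHom (u : Amb α β))) w := rfl
      rw [this, AddChar.sum_eq_ite]
      congr 1
      simp only [eq_iff_iff]
      constructor
      · intro h0
        apply zinner_nondeg
        intro w
        have := AddChar.eq_zero_iff.mp h0 w
        simp only [AddChar.compAddMonoidHom_apply] at this
        have : ψ ((rHom (u : Amb α β)) w) = ψ 0 := by rw [this, AddChar.map_zero_eq_one]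
        exact hψinj this
      · intro h0
        rw [AddChar.eq_zero_iff]
        intro w
        simp [rHom, h0, zinner_zero_left, AddChar.map_zero_eq_one]
    rw [Finset.sum_congr rfl fun u _ => inner u]
    have : ∀ u : C, ((u : Amb α β) = 0) = (u = 0) := by
      intro u; simp [ZeroMemClass.coe_eq_zero]
    simp only [this]
    rw [Finset.sum_ite_eq' univ (0 : C) (fun _ => (Fintype.card (Amb α β) : ℂ))]
    simp
  have S2 : ∑ w : Amb α β, ∑ u : C, ψ (zinner (u : Amb α β) w)
      = (Fintype.card C : ℂ) * Fintype.card (zdualSub C) := by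
    have inner : ∀ w : Amb α β, ∑ u : C, ψ (zinner (u : Amb α β) w)
        = if w ∈ zdualSub C then (Fintype.card C : ℂ) else 0 := by
      intro w
      have : ∑ u : C, ψ (zinner (u : Amb α β) w)
          = ∑ u : C, (ψ.compAddMonoidHom (lHom C w)) u := rfl
      rw [this, AddChar.sum_eq_ite]
      congr 1
      simp only [eq_iff_iff]
      constructor
      · intro h0 u hu
        have := AddChar.eq_zero_iff.mp h0 ⟨u, hu⟩
        simp only [AddChar.compAddMonoidHom_apply] at this
        have : ψ ((lHom C w) ⟨u, hu⟩) = ψ 0 := by rw [this, AddChar.map_zero_eq_one]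
        exact hψinj this
      · intro h0
        rw [AddChar.eq_zero_iff]
        intro c
        have : zinner (c : Amb α β) w = 0 := h0 (c : Amb α β) c.2
        simp [lHom, this, AddChar.map_zero_eq_one]
    rw [Finset.sum_congr rfl fun w _ => inner w]
    rw [Finset.sum_ite, Finset.sum_const, Finset.sum_const_zero, add_zero, nsmul_eq_mul,
      mul_comm]
    congr 2
    rw [Fintype.card_subtype]
  rw [S2] at S1
  exact_mod_cast S1


/-- If `C` is a Z2Z4-additive ACD code, every vector of the ambient space
is uniquely `w1 + w2` with `w1 ∈ C`, `w2 ∈ C⊥`. -/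
theorem stmt1 {α β : ℕ} (C : AddSubgroup (Amb α β))
    (hACD : ∀ x ∈ C, x ∈ zdual (C : Set (Amb α β)) → x = 0) :
    ∀ w : Amb α β, ∃! p : Amb α β × Amb α β,
      p.1 ∈ C ∧ p.2 ∈ zdual (C : Set (Amb α β)) ∧ w = p.1 + p.2 := by
  classical
  intro w
  set D := zdualSub C with hD
  let F : C × D → Amb α β := fun p => (p.1 : Amb α β) + (p.2 : Amb α β)
  have hFinj : Function.Injective F := by
    rintro ⟨a, b⟩ ⟨a', b'⟩ h
    simp only [F] at h
    have key : (a : Amb α β) - a' = (b' : Amb α β) - b := by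
      linear_combination h
    have hmem : (a : Amb α β) - a' ∈ C := sub_mem a.2 a'.2
    have hmem' : (a : Amb α β) - a' ∈ zdual (C : Set (Amb α β)) := by
      rw [key]; exact sub_mem b'.2 b.2
    have h0 := hACD _ hmem hmem'
    have ha : (a : Amb α β) = a' := by linear_combination h0
    have hb : (b : Amb α β) = b' := by
      have : (b' : Amb α β) - b = 0 := by rw [← key, h0]
      linear_combination -this
    exact Prod.ext (Subtype.ext ha) (Subtype.ext hb)
  have hcard : Nat.card (C × D) = Nat.card (Amb α β) := by
    rw [Nat.card_prod, card_mul_card]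
  have hFbij : Function.Bijective F :=
    (Nat.bijective_iff_injective_and_card F).mpr ⟨hFinj, hcard⟩
  obtain ⟨⟨a, b⟩, hab⟩ := hFbij.2 w
  refine ⟨((a : Amb α β), (b : Amb α β)), ⟨a.2, b.2, hab.symm⟩, ?_⟩
  rintro ⟨p1, p2⟩ ⟨hp1, hp2, hpw⟩
  have hFF : F (⟨p1, hp1⟩, ⟨p2, hp2⟩) = F (a, b) := by
    rw [hab, hpw]
  have h2 := hFinj hFF
  simp only [Prod.mk.injEq] at h2 ⊢
  exact ⟨Subtype.ext_iff.mp h2.1, Subtype.ext_iff.mp h2.2⟩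
end

section
/- Let C be a binary linear code of length n and dimension k with generator matrix G (rows forming a basis). Then C is LCD (i.e., C ∩ C⊥ = {0}) if and only if the k×k matrix G·Gᵀ over Z2 is invertible. -/
open Finset

/-- A binary linear code `C` of dimension `k` with generator matrix `G`
(rows a basis) is LCD iff `G·Gᵀ` is invertible over `Z2`. -/
theorem stmt2 {n k : ℕ} (G : Matrix (Fin k) (Fin n) (ZMod 2))
    (C : Submodule (ZMod 2) (Fin n → ZMod 2))
    (hspan : C = Submodule.span (ZMod 2) (Set.range fun i => G i))
    (hind : LinearIndependent (ZMod 2) fun i => G i) :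
    (∀ x ∈ C, x ∈ bdual2 (C : Set (Fin n → ZMod 2)) → x = 0) ↔
      IsUnit (G * G.transpose) := by
  classical
  have hGT : ∀ c : Fin k → ZMod 2, G.transpose.mulVec c = ∑ i, c i • G i := by
    intro c
    ext j
    simp [Matrix.mulVec, dotProduct, Finset.sum_apply, mul_comm]
  have hmem : ∀ x, x ∈ C ↔ ∃ c : Fin k → ZMod 2, G.transpose.mulVec c = x := by
    intro x
    rw [hspan, Submodule.mem_span_range_iff_exists_fun]
    simp_rw [hGT]
  have hrow : ∀ i, G i ∈ C := by
    intro i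
    rw [hspan]
    exact Submodule.subset_span ⟨i, rfl⟩
  have hdual : ∀ x, x ∈ bdual2 (C : Set (Fin n → ZMod 2)) ↔ G.mulVec x = 0 := by
    intro x
    constructor
    · intro hx
      ext i
      have := hx (G i) (hrow i)
      simpa [Matrix.mulVec, dotProduct, binner2] using this
    · intro hx u hu
      obtain ⟨c, rfl⟩ := (hmem u).1 hu
      have : dotProduct c (G.mulVec x) = 0 := by rw [hx]; simp
      rw [Matrix.dotProduct_mulVec] at this
      simpa [binner2, Matrix.mulVec_transpose, dotProduct] using this
  have hinj : ∀ c : Fin k → ZMod 2, G.transpose.mulVec c = 0 → c = 0 := by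
    intro c hc
    rw [hGT] at hc
    ext i
    exact Fintype.linearIndependent_iff.mp hind c hc i
  have hdet : IsUnit (G * G.transpose) ↔ ¬ ∃ v ≠ 0, (G * G.transpose).mulVec v = 0 := by
    rw [Matrix.isUnit_iff_isUnit_det, isUnit_iff_ne_zero]
    exact not_congr Matrix.exists_mulVec_eq_zero_iff.symm
  rw [hdet]
  constructor
  · intro h
    rintro ⟨v, hv, hv0⟩
    apply hv
    have hmv : G.transpose.mulVec v ∈ C := (hmem _).2 ⟨v, rfl⟩
    have hd : G.transpose.mulVec v ∈ bdual2 (C : Set (Fin n → ZMod 2)) := by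
      rw [hdual, Matrix.mulVec_mulVec, hv0]
    exact hinj v (h _ hmv hd)
  · intro h x hx hxd
    obtain ⟨c, rfl⟩ := (hmem x).1 hx
    rw [hdual] at hxd
    by_contra hne
    apply h
    refine ⟨c, ?_, ?_⟩
    · intro hc0; apply hne; rw [hc0]; simp [Matrix.mulVec_zero]
    · rw [Matrix.mulVec_mulVec] at hxd; exact hxd
end

section
/- Let C be a Z2Z4-additive code generated by vectors v_1,…,v_r ∈ Z2^α × Z4^β. If [v_i, v_j] ∈ {0,2} for all i ≠ j and [v_i, v_i] ∉ {0,2} for all i, then C ∩ C⊥ = {0}, i.e., C is an ACD code. -/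
open Finset

def two4 : ZMod 2 →+ ZMod 4 where
  toFun a := 2 * (a.val : ZMod 4)
  map_zero' := by decide
  map_add' := by decide

lemma zinner_eq {α β : ℕ} (u v : Amb α β) :
    zinner u v = ∑ i, two4 (u.1 i * v.1 i) + ∑ j, u.2 j * v.2 j := by
  have h : ∀ a b : ZMod 2, 2 * ((a.val : ZMod 4) * (b.val : ZMod 4)) = two4 (a * b) := by decide
  unfold zinner
  rw [Finset.mul_sum]
  congr 1
  exact Finset.sum_congr rfl fun i _ => h _ _

def zinnerHom {α β : ℕ} (u : Amb α β) : Amb α β →+ ZMod 4 where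
  toFun w := zinner u w
  map_zero' := by simp [zinner_eq]
  map_add' w₁ w₂ := by
    simp only [zinner_eq, Prod.fst_add, Prod.snd_add, Pi.add_apply, mul_add, map_add,
      Finset.sum_add_distrib]
    ring

/-- If `C` is generated by `v_1,…,v_r` with `[v_i,v_j] ∈ {0,2}` for `i ≠ j`
and `[v_i,v_i] ∉ {0,2}`, then `C` is ACD. -/
theorem stmt3 {α β r : ℕ} (v : Fin r → Amb α β) (C : AddSubgroup (Amb α β))
    (hC : C = AddSubgroup.closure (Set.range v))
    (hij : ∀ i j, i ≠ j → zinner (v i) (v j) = 0 ∨ zinner (v i) (v j) = 2)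
    (hii : ∀ i, zinner (v i) (v i) ≠ 0 ∧ zinner (v i) (v i) ≠ 2) :
    ∀ x ∈ C, x ∈ zdual (C : Set (Amb α β)) → x = 0 := by
  intro x hxC hxD
  -- write x as an integer combination of the generators
  have hspan : x ∈ Submodule.span ℤ (Set.range v) := by
    have : x ∈ (Submodule.span ℤ (Set.range v)).toAddSubgroup := by
      rw [Submodule.span_int_eq_addSubgroupClosure, ← hC]; exact hxC
    exact this
  obtain ⟨n, hn⟩ := (Submodule.mem_span_range_iff_exists_fun ℤ).mp hspan
  -- key equations
  have key : ∀ j, ∑ i, n i • zinner (v j) (v i) = 0 := by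
    intro j
    have hvj : v j ∈ C := by rw [hC]; exact AddSubgroup.subset_closure ⟨j, rfl⟩
    have h0 : zinner (v j) x = 0 := hxD (v j) hvj
    calc ∑ i, n i • zinner (v j) (v i)
        = zinnerHom (v j) (∑ i, n i • v i) := by
          rw [map_sum]; exact Finset.sum_congr rfl fun i _ => (map_zsmul (zinnerHom (v j)) _ _).symm
      _ = 0 := by rw [hn]; exact h0
  -- the reduction map to ZMod 2
  let π : ZMod 4 →+* ZMod 2 := ZMod.castHom (show 2 ∣ 4 by norm_num) (ZMod 2)
  have hπ0 : ∀ z : ZMod 4, z = 0 ∨ z = 2 → π z = 0 := by decide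
  have hπ1 : ∀ z : ZMod 4, z ≠ 0 → z ≠ 2 → π z = 1 := by decide
  -- step 1: every coefficient is even
  have heven : ∀ j, (2 : ℤ) ∣ n j := by
    intro j
    have h2 : π (∑ i, n i • zinner (v j) (v i)) = 0 := by rw [key j]; simp
    rw [map_sum] at h2
    have h3 : ∑ i, π (n i • zinner (v j) (v i)) = (n j : ZMod 2) := by
      rw [Finset.sum_eq_single j]
      · rw [map_zsmul, hπ1 _ (hii j).1 (hii j).2, zsmul_eq_mul, mul_one]
      · intro i _ hi
        rw [map_zsmul, hπ0 _ (hij j i (Ne.symm hi)), smul_zero]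
      · intro h; exact absurd (Finset.mem_univ j) h
    rw [h3] at h2
    exact (ZMod.intCast_zmod_eq_zero_iff_dvd _ 2).mp h2
  -- step 2: every coefficient is divisible by 4
  have h4 : ∀ j, (4 : ℤ) ∣ n j := by
    intro j
    have hz : ∀ (m : ℤ) (z : ZMod 4), z = 0 ∨ z = 2 → (2 * m) • z = 0 := by
      intro m z hzz
      rcases hzz with h | h <;> rw [h]
      · simp
      · rw [mul_comm, mul_smul, show ((2:ℤ) • (2 : ZMod 4)) = 0 by rw [two_zsmul]; decide,
          smul_zero]
    have h5 : ∑ i, n i • zinner (v j) (v i) = n j • zinner (v j) (v j) := by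
      rw [Finset.sum_eq_single j]
      · intro i _ hi
        obtain ⟨m, hm⟩ := heven i
        rw [hm]; exact hz m _ (hij j i (Ne.symm hi))
      · intro h; exact absurd (Finset.mem_univ j) h
    have h6 : (n j : ZMod 4) * zinner (v j) (v j) = 0 := by
      rw [← zsmul_eq_mul, ← h5, key j]
    have hcancel : ∀ z : ZMod 4, z ≠ 0 → z ≠ 2 → ∀ w : ZMod 4, w * z = 0 → w = 0 := by decide
    have h7 : (n j : ZMod 4) = 0 := hcancel _ (hii j).1 (hii j).2 _ h6
    exact (ZMod.intCast_zmod_eq_zero_iff_dvd _ 4).mp h7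
  -- step 3: conclude x = 0
  have c2 : (4 : ZMod 2) = 0 := by decide
  have c4 : (4 : ZMod 4) = 0 := by decide
  have hfour : ∀ w : Amb α β, (4 : ℤ) • w = 0 := by
    intro w
    rw [Prod.ext_iff]
    constructor <;> · funext i; simp [Prod.smul_fst, Prod.smul_snd, Pi.smul_apply,
      zsmul_eq_mul, c2, c4]
  rw [← hn]
  apply Finset.sum_eq_zero
  intro i _
  obtain ⟨k, hk⟩ := h4 i
  rw [hk, mul_smul, hfour]
end

section
/- Let D be a self-orthogonal binary linear code of length α and dimension δ with generator matrix G_X. Then the Z2Z4-additive code C ⊆ Z2^α × Z4^δ generated by the rows of (G_X | I_δ), where G_X is the binary matrix and I_δ is the δ×δ identity matrix over Z4, satisfies C ∩ C⊥ = {0}. -/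
open Finset

/-- `a ↦ 2·a.val` as an additive hom `ZMod 2 →+ ZMod 4`. -/
def G24 : ZMod 2 →+ ZMod 4 where
  toFun a := 2 * (a.val : ZMod 4)
  map_zero' := by decide
  map_add' := by decide

lemma G24_mul (a b : ZMod 2) :
    2 * ((a.val : ZMod 4) * (b.val : ZMod 4)) = G24 (a * b) := by
  revert a b; decide

/-- If `D` is a self-orthogonal binary `(α,δ)` code with generator matrix `G_X`,
the Z2Z4-additive code generated by the rows of `(G_X | I_δ)` is ACD. -/
theorem stmt5 {α δ : ℕ} (GX : Matrix (Fin δ) (Fin α) (ZMod 2))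
    (D : Submodule (ZMod 2) (Fin α → ZMod 2))
    (hD : D = Submodule.span (ZMod 2) (Set.range fun i => GX i))
    (hind : LinearIndependent (ZMod 2) fun i => GX i)
    (hso : ∀ u ∈ D, ∀ w ∈ D, binner2 u w = 0)
    (C : AddSubgroup (Amb α δ))
    (hC : C = AddSubgroup.closure (Set.range fun i =>
      ((GX i, fun j => if j = i then (1 : ZMod 4) else 0) : Amb α δ))) :
    ∀ x ∈ C, x ∈ zdual (C : Set (Amb α δ)) → x = 0 := by
  intro x hx hxd
  have hc2 : ((2:ℕ) ∣ 4) := by norm_num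
  set c : ZMod 4 →+* ZMod 2 := ZMod.castHom hc2 (ZMod 2) with hcdef
  -- additive hom measuring the linear relation
  let φ : Amb α δ →+ (Fin α → ZMod 2) :=
    { toFun := fun y => y.1 + ∑ i, (c (y.2 i)) • GX i
      map_zero' := by simp
      map_add' := by
        intro a b
        simp only [Prod.fst_add, Prod.snd_add, Pi.add_apply, map_add, add_smul,
          Finset.sum_add_distrib]
        abel }
  have hgen : ∀ i : Fin δ,
      ((GX i, fun j => if j = i then (1 : ZMod 4) else 0) : Amb α δ) ∈ φ.ker := by
    intro i
    have : φ ((GX i, fun j => if j = i then (1 : ZMod 4) else 0) : Amb α δ)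
        = GX i + GX i := by
      show GX i + ∑ i', (c (if i' = i then (1:ZMod 4) else 0)) • GX i' = GX i + GX i
      congr 1
      rw [Finset.sum_eq_single i]
      · simp
      · intro j _ hj; simp [hj]
      · intro h; exact absurd (Finset.mem_univ i) h
    rw [AddMonoidHom.mem_ker, this]
    ext k
    have : ∀ a : ZMod 2, a + a = 0 := by decide
    exact this _
  have hCker : (C : Set (Amb α δ)) ⊆ (φ.ker : Set (Amb α δ)) := by
    rw [hC]
    refine (AddSubgroup.closure_le _).2 ?_
    rintro _ ⟨i, rfl⟩
    exact hgen i
  have hxker : x.1 + ∑ i, (c (x.2 i)) • GX i = 0 := hCker hx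
  have hneg : ∀ a : ZMod 2, -a = a := by decide
  have hx1 : x.1 = ∑ i, (c (x.2 i)) • GX i := by
    have h := eq_neg_of_add_eq_zero_left hxker
    rw [h]; ext k; simp [hneg]
  -- x.1 ∈ D
  have hGXD : ∀ i, GX i ∈ D := by
    intro i; rw [hD]
    exact Submodule.subset_span ⟨i, rfl⟩
  have hx1D : x.1 ∈ D := by
    rw [hx1]
    exact Submodule.sum_mem _ fun i _ => Submodule.smul_mem _ _ (hGXD i)
  -- each coordinate of x.2 vanishes
  have hx2 : ∀ i, x.2 i = 0 := by
    intro i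
    have hgenC : ((GX i, fun j => if j = i then (1 : ZMod 4) else 0) : Amb α δ) ∈ C := by
      rw [hC]; exact AddSubgroup.subset_closure ⟨i, rfl⟩
    have h0 := hxd _ hgenC
    have hb : binner2 (GX i) x.1 = 0 := hso _ (hGXD i) _ hx1D
    unfold zinner at h0
    have hsum2 : 2 * ∑ k, (((GX i k).val : ZMod 4)) * ((x.1 k).val : ZMod 4) = 0 := by
      rw [Finset.mul_sum]
      calc ∑ k, 2 * ((((GX i k).val : ZMod 4)) * ((x.1 k).val : ZMod 4))
          = ∑ k, G24 (GX i k * x.1 k) := by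
            exact Finset.sum_congr rfl fun k _ => G24_mul _ _
        _ = G24 (∑ k, GX i k * x.1 k) := (map_sum G24 _ _).symm
        _ = G24 (binner2 (GX i) x.1) := rfl
        _ = 0 := by rw [hb]; exact G24.map_zero
    rw [hsum2, zero_add] at h0
    rw [← h0, Finset.sum_eq_single i]
    · simp
    · intro j _ hj; simp [hj]
    · intro h; exact absurd (Finset.mem_univ i) h
  have hx2' : x.2 = 0 := funext hx2
  have hx1' : x.1 = 0 := by
    rw [hx1]; refine Finset.sum_eq_zero fun i _ => ?_
    rw [hx2 i]; simp
  exact Prod.ext hx1' hx2'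
end

section
/- Let u, v ∈ Z2^α × Z4^β with 2u*v = 0. Then [Φ(u), Φ(v)]_2 = 0 in Z2 if and only if [u,v] = 0 in Z4. More precisely, [u,v] = 2·[Φ(u),Φ(v)]_2 (lifting the binary inner product to {0,1} ⊂ Z4). -/
open Finset

/-! Coordinatewise, `2·x_i·y_i` (binary part) and `u'_j·v'_j` (when `2u'_j v'_j = 0`) are the
images of the corresponding binary products of Gray images under the additive embedding
`Z2 → Z4`, `x ↦ 2x`; summing gives `[u,v] = 2·[Φ(u),Φ(v)]_2`, and injectivity of the embedding
gives the equivalence. -/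

def doubleLift : ZMod 2 →+ ZMod 4 where
  toFun x := 2 * (x.val : ZMod 4)
  map_zero' := by decide
  map_add' := by decide

lemma doubleLift_apply (x : ZMod 2) : doubleLift x = 2 * (x.val : ZMod 4) := rfl

lemma doubleLift_injective : Function.Injective doubleLift := by decide

lemma doubleLift_mul (a b : ZMod 2) :
    doubleLift (a * b) = 2 * ((a.val : ZMod 4) * (b.val : ZMod 4)) := by
  revert a b; decide

lemma mul_eq_doubleLift_gray {a b : ZMod 4} (h : 2 * a * b = 0) :
    a * b = doubleLift ((gray a).1 * (gray b).1 + (gray a).2 * (gray b).2) := by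
  revert h; revert a b; decide

lemma star2_eq_zero_iff {α β : ℕ} (u v : Amb α β) :
    star2 u v = 0 ↔ ∀ j, 2 * u.2 j * v.2 j = 0 := by
  simp only [star2, Prod.ext_iff, Prod.fst_zero, Prod.snd_zero, funext_iff, Pi.zero_apply,
    true_and]

lemma zinner_eq_doubleLift_binner {α β : ℕ} {u v : Amb α β}
    (h : ∀ j, 2 * u.2 j * v.2 j = 0) :
    zinner u v = doubleLift (binner (Phi u) (Phi v)) := by
  simp only [zinner, binner, Phi, map_add, map_sum, doubleLift_mul, mul_sum, add_assoc,
    ← sum_add_distrib, ← mul_eq_doubleLift_gray (h _)]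

/-- If `2u*v = 0`, then `[u,v] = 2·[Φ(u),Φ(v)]_2`; in particular
`[Φ(u),Φ(v)]_2 = 0` iff `[u,v] = 0`. -/
theorem stmt13 {α β : ℕ} (u v : Amb α β) (h : star2 u v = 0) :
    zinner u v = 2 * ((binner (Phi u) (Phi v)).val : ZMod 4) ∧
    (binner (Phi u) (Phi v) = 0 ↔ zinner u v = 0) := by
  have key := zinner_eq_doubleLift_binner ((star2_eq_zero_iff u v).mp h)
  exact ⟨key.trans (doubleLift_apply _),
    by rw [key, map_eq_zero_iff _ doubleLift_injective]⟩
end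

section
/- Let C be a Z2Z4-additive ACD code. The following are equivalent: (i) Φ(C) is linear and D_C ⊆ C; (ii) Φ(C⊥) is linear and D_C ⊆ C⊥; (iii) Φ(C) and Φ(C⊥) are both linear; (iv) D_C = {0}; (v) Φ(C) and Φ(C⊥) are both binary LCD codes; (vi) Φ(C⊥) = Φ(C)⊥. -/
open Finset

-- ============ aux ============
open Function

section Duality

/-- Torsion-count property of `ZMod k`. -/
def TorCard (k : ℕ) : Prop :=
  ∀ m, m ∣ k → Nat.card {a : ZMod k // (m : ZMod k) * a = 0} = m

lemma torCard_two : TorCard 2 := by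
  intro m hm
  have h4 : m ≤ 2 := Nat.le_of_dvd (by norm_num) hm
  have h1 : 1 ≤ m := Nat.one_le_iff_ne_zero.mpr (by rintro rfl; norm_num at hm)
  interval_cases m
  · rw [Nat.card_eq_fintype_card]; decide
  · rw [Nat.card_eq_fintype_card]; decide

lemma torCard_four : TorCard 4 := by
  intro m hm
  have h4 : m ≤ 4 := Nat.le_of_dvd (by norm_num) hm
  have h1 : 1 ≤ m := Nat.one_le_iff_ne_zero.mpr (by rintro rfl; norm_num at hm)
  interval_cases m
  · rw [Nat.card_eq_fintype_card]; decide
  · rw [Nat.card_eq_fintype_card]; decide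
  · exfalso; norm_num at hm
  · rw [Nat.card_eq_fintype_card]; decide

lemma card_zmod_addHom {n k : ℕ} (htor : TorCard k) (hdvd : n ∣ k) :
    Nat.card (ZMod n →+ ZMod k) = n := by
  have e3 : {a : ZMod k // (n : ZMod k) * a = 0} ≃ {f : ℤ →+ ZMod k // f (n : ℤ) = 0} := by
    refine (zmultiplesHom (ZMod k)).subtypeEquiv ?_
    intro a
    rw [zmultiplesHom_apply, natCast_zsmul, nsmul_eq_mul]
  rw [← Nat.card_congr (e3.trans (ZMod.lift n)), htor n hdvd]

lemma card_addHom_zmod {k : ℕ} (htor : TorCard k) (G : Type*) [AddCommGroup G] [Finite G]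
    (hexp : ∀ x : G, k • x = 0) :
    Nat.card (G →+ ZMod k) = Nat.card G := by
  classical
  obtain ⟨ι, hι, n, hn1, ⟨e⟩⟩ := AddCommGroup.equiv_directSum_zmod_of_finite' G
  have hdvd : ∀ i, n i ∣ k := by
    intro i
    have h := hexp (e.symm (DirectSum.of (fun i => ZMod (n i)) i 1))
    have h2 : k • (DirectSum.of (fun i => ZMod (n i)) i 1) = 0 := by
      have := congrArg e h
      rwa [map_nsmul, e.apply_symm_apply, map_zero] at this
    have h3 : k • ((DirectSum.of (fun i => ZMod (n i)) i 1) i) = 0 := by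
      rw [← DFinsupp.smul_apply, h2]; rfl
    rw [DirectSum.of_eq_same] at h3
    rw [nsmul_eq_mul, mul_one] at h3
    exact (ZMod.natCast_eq_zero_iff k (n i)).mp h3
  have e4 : (G →+ ZMod k) ≃ ((DirectSum ι fun i => ZMod (n i)) →+ ZMod k) :=
    { toFun := fun f => f.comp e.symm.toAddMonoidHom
      invFun := fun f => f.comp e.toAddMonoidHom
      left_inv := fun f => by ext x; simp
      right_inv := fun f => by ext x; simp }
  have e5 : ((DirectSum ι fun i => ZMod (n i)) →+ ZMod k) ≃ ∀ i, (ZMod (n i) →+ ZMod k) :=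
    DFinsupp.liftAddHom.symm.toEquiv
  have hL : Nat.card (G →+ ZMod k) = ∏ i : ι, Nat.card (ZMod (n i) →+ ZMod k) := by
    rw [Nat.card_congr (e4.trans e5), Nat.card_pi]
  have hR : Nat.card G = ∏ i : ι, Nat.card (ZMod (n i)) := by
    rw [Nat.card_congr (e.toEquiv.trans DFinsupp.equivFunOnFintype), Nat.card_pi]
  rw [hL, hR]
  exact Finset.prod_congr rfl fun i _ => by
    rw [card_zmod_addHom htor (hdvd i), Nat.card_zmod]

variable {M : Type*} [AddCommGroup M] [Fintype M] {k : ℕ} [NeZero k]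

variable (e : M →+ M →+ ZMod k)

/-- The dual of a subset w.r.t. a bilinear pairing, as an additive subgroup. -/
def dualSet (S : Set M) : AddSubgroup M where
  carrier := {v | ∀ u ∈ S, e u v = 0}
  add_mem' := by intro a b ha hb u hu; rw [map_add, ha u hu, hb u hu, add_zero]
  zero_mem' := by intro u _; exact map_zero (e u)
  neg_mem' := by intro a ha u hu; rw [map_neg, ha u hu, neg_zero]

omit [Fintype M] [NeZero k] in
lemma mem_dualSet {S : Set M} {v : M} : v ∈ dualSet e S ↔ ∀ u ∈ S, e u v = 0 := Iff.rfl

omit [Fintype M] in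
lemma exp_of_bij (hbij : Bijective e) (x : M) : k • x = 0 := by
  apply hbij.1
  rw [map_nsmul, map_zero]
  ext u
  show (k • (e x)) u = 0
  rw [AddMonoidHom.nsmul_apply, nsmul_eq_mul, ZMod.natCast_self, zero_mul]

lemma card_dualSet (htor : TorCard k) (hsymm : ∀ u v, e u v = e v u) (hbij : Bijective e)
    (C : AddSubgroup M) :
    Nat.card (dualSet e ↑C) * Nat.card C = Nat.card M := by
  classical
  have hexp : ∀ x : M, k • x = 0 := exp_of_bij e hbij
  have e1 : (dualSet e ↑C) ≃ {f : M →+ ZMod k // ∀ u ∈ C, f u = 0} := by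
    refine Equiv.ofBijective (fun v => ⟨e v, fun u hu => by
      rw [← hsymm]; exact v.2 u hu⟩) ⟨?_, ?_⟩
    · intro a b hab
      apply Subtype.ext
      exact hbij.1 (congrArg Subtype.val hab)
    · rintro ⟨f, hf⟩
      obtain ⟨v, rfl⟩ := hbij.2 f
      exact ⟨⟨v, fun u hu => by rw [hsymm]; exact hf u hu⟩, rfl⟩
  have e2 : {f : M →+ ZMod k // ∀ u ∈ C, f u = 0} ≃ ((M ⧸ C) →+ ZMod k) :=
    { toFun := fun f => QuotientAddGroup.lift C f.1 (fun x hx => AddMonoidHom.mem_ker.mpr (f.2 x hx))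
      invFun := fun g => ⟨g.comp (QuotientAddGroup.mk' C), fun u hu => by
        have h0 : (QuotientAddGroup.mk' C) u = 0 := (QuotientAddGroup.eq_zero_iff u).mpr hu
        rw [AddMonoidHom.comp_apply, h0, map_zero]⟩
      left_inv := fun f => Subtype.ext (AddMonoidHom.ext fun x => rfl)
      right_inv := fun g =>
        AddMonoidHom.ext fun x => QuotientAddGroup.induction_on x fun z => rfl }
  have hq : ∀ x : M ⧸ C, k • x = 0 := by
    intro x
    refine QuotientAddGroup.induction_on x fun z => ?_
    rw [show ((z : M ⧸ C)) = (QuotientAddGroup.mk' C) z from rfl, ← map_nsmul, hexp, map_zero]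
  have hcq := card_addHom_zmod htor (M ⧸ C) hq
  rw [Nat.card_congr (e1.trans e2), hcq,
    ← AddSubgroup.card_eq_card_quotient_mul_card_addSubgroup C]

lemma dualSet_dualSet (htor : TorCard k) (hsymm : ∀ u v, e u v = e v u) (hbij : Bijective e)
    (C : AddSubgroup M) :
    dualSet e ↑(dualSet e ↑C) = C := by
  have hle : (C : Set M) ⊆ ↑(dualSet e ↑(dualSet e ↑C)) := by
    intro u hu v hv
    rw [hsymm]
    exact hv u hu
  have h1 := card_dualSet e htor hsymm hbij C
  have h2 := card_dualSet e htor hsymm hbij (dualSet e ↑C)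
  have hpos : 0 < Nat.card (dualSet e ↑C) := Nat.card_pos
  have hcard : Nat.card (dualSet e ↑(dualSet e ↑C)) = Nat.card C := by
    have h3 : Nat.card (dualSet e ↑(dualSet e ↑C)) * Nat.card (dualSet e ↑C)
        = Nat.card C * Nat.card (dualSet e ↑C) := by
      rw [h2, mul_comm (Nat.card C), h1]
    exact Nat.eq_of_mul_eq_mul_right hpos h3
  symm
  apply SetLike.ext'
  apply Set.eq_of_subset_of_ncard_le hle
  rw [← Nat.card_coe_set_eq, ← Nat.card_coe_set_eq]
  simp only [SetLike.coe_sort_coe]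
  rw [hcard]

end Duality

namespace ACD

/-- cast `ZMod 2 → ZMod 4` via val. -/
def c2 (a : ZMod 2) : ZMod 4 := (a.val : ZMod 4)

/-- The doubling embedding `ZMod 2 →+ ZMod 4`. -/
def DD : ZMod 2 →+ ZMod 4 :=
  AddMonoidHom.mk' (fun a => 2 * (a.val : ZMod 4)) (by decide)

variable {α β : ℕ}

lemma zinner_eq (u v : Amb α β) :
    zinner u v = (∑ i, 2 * c2 (u.1 i) * c2 (v.1 i)) + ∑ j, u.2 j * v.2 j := by
  rw [zinner, Finset.mul_sum]
  congr 1
  refine Finset.sum_congr rfl fun i _ => by rw [c2, c2, mul_assoc]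

lemma zinner_add_right (u v w : Amb α β) : zinner u (v + w) = zinner u v + zinner u w := by
  have key : ∀ a b c : ZMod 2, 2 * c2 a * c2 (b + c) = 2 * c2 a * c2 b + 2 * c2 a * c2 c := by
    decide
  simp only [zinner_eq, Prod.fst_add, Prod.snd_add, Pi.add_apply]
  rw [Finset.sum_congr rfl fun i _ => key (u.1 i) (v.1 i) (w.1 i),
    Finset.sum_congr rfl fun j (_ : j ∈ univ) => mul_add (u.2 j) (v.2 j) (w.2 j),
    Finset.sum_add_distrib, Finset.sum_add_distrib]
  abel

lemma zinner_comm (u v : Amb α β) : zinner u v = zinner v u := by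
  simp only [zinner_eq]
  congr 1
  · exact Finset.sum_congr rfl fun i _ => by ring
  · exact Finset.sum_congr rfl fun j _ => mul_comm _ _

lemma zinner_add_left (u v w : Amb α β) : zinner (u + v) w = zinner u w + zinner v w := by
  rw [zinner_comm, zinner_add_right, zinner_comm w u, zinner_comm w v]

/-- The bundled `ZMod 4`-valued pairing. -/
def zE : Amb α β →+ (Amb α β →+ ZMod 4) :=
  AddMonoidHom.mk' (fun u => AddMonoidHom.mk' (fun v => zinner u v) (zinner_add_right u))
    (fun u v => AddMonoidHom.ext fun w => zinner_add_left u v w)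

@[simp] lemma zE_apply (u v : Amb α β) : zE u v = zinner u v := rfl

lemma binner_add_right (u v w : Bin α β) : binner u (v + w) = binner u v + binner u w := by
  simp only [binner, Prod.fst_add, Prod.snd_add, Pi.add_apply, mul_add,
    Finset.sum_add_distrib]
  abel

lemma binner_comm (u v : Bin α β) : binner u v = binner v u := by
  simp only [binner]
  congr 1
  · congr 1
    · exact Finset.sum_congr rfl fun i _ => mul_comm _ _
    · exact Finset.sum_congr rfl fun j _ => mul_comm _ _
  · exact Finset.sum_congr rfl fun j _ => mul_comm _ _

lemma binner_add_left (u v w : Bin α β) : binner (u + v) w = binner u w + binner v w := by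
  rw [binner_comm, binner_add_right, binner_comm w u, binner_comm w v]

/-- The bundled `ZMod 2`-valued pairing. -/
def bE : Bin α β →+ (Bin α β →+ ZMod 2) :=
  AddMonoidHom.mk' (fun u => AddMonoidHom.mk' (fun v => binner u v) (binner_add_right u))
    (fun u v => AddMonoidHom.ext fun w => binner_add_left u v w)

@[simp] lemma bE_apply (u v : Bin α β) : bE u v = binner u v := rfl

@[simp] lemma c2_zero : c2 0 = 0 := rfl
@[simp] lemma c2_one : c2 1 = 1 := rfl

lemma eq_zero_of_zinner (u : Amb α β) (h : ∀ v, zinner u v = 0) : u = 0 := by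
  have key2 : ∀ a : ZMod 2, 2 * c2 a = 0 → a = 0 := by decide
  have h1 : u.1 = 0 := by
    funext i
    have hv := h (Pi.single i 1, 0)
    rw [zinner_eq] at hv
    have hsum2 : (∑ j, u.2 j * (((Pi.single i 1 : Fin α → ZMod 2), (0 : Fin β → ZMod 4)) : Amb α β).2 j) = 0 := by
      simp
    rw [hsum2, add_zero] at hv
    have hsum1 : (∑ k, 2 * c2 (u.1 k) * c2 ((Pi.single i 1 : Fin α → ZMod 2) k)) = 2 * c2 (u.1 i) := by
      rw [Finset.sum_eq_single i]
      · rw [Pi.single_eq_same, c2_one, mul_one]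
      · intro k _ hk
        rw [Pi.single_eq_of_ne hk, c2_zero, mul_zero]
      · intro hi; exact absurd (Finset.mem_univ i) hi
    rw [hsum1] at hv
    simpa using key2 _ hv
  have h2 : u.2 = 0 := by
    funext j
    have hv := h (0, Pi.single j 1)
    rw [zinner_eq] at hv
    have hsum1 : (∑ k, 2 * c2 (u.1 k) * c2 ((((0 : Fin α → ZMod 2), (Pi.single j 1 : Fin β → ZMod 4)) : Amb α β).1 k)) = 0 := by
      simp
    rw [hsum1, zero_add] at hv
    have hsum2 : (∑ t, u.2 t * (Pi.single j 1 : Fin β → ZMod 4) t) = u.2 j := by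
      rw [Finset.sum_eq_single j]
      · rw [Pi.single_eq_same, mul_one]
      · intro t _ ht
        rw [Pi.single_eq_of_ne ht, mul_zero]
      · intro hj; exact absurd (Finset.mem_univ j) hj
    rw [hsum2] at hv
    simpa using hv
  exact Prod.ext h1 h2

lemma zE_inj : Function.Injective (zE (α := α) (β := β)) := by
  rw [injective_iff_map_eq_zero]
  intro u hu
  refine eq_zero_of_zinner u fun v => ?_
  have := congrArg (fun f => f v) hu
  simpa using this

lemma eq_zero_of_binner (u : Bin α β) (h : ∀ v, binner u v = 0) : u = 0 := by
  have comp : ∀ (n : ℕ) (f : Fin n → ZMod 2) (i : Fin n),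
      (∑ k, f k * (Pi.single i 1 : Fin n → ZMod 2) k) = f i := by
    intro n f i
    rw [Finset.sum_eq_single i]
    · rw [Pi.single_eq_same, mul_one]
    · intro t _ ht; rw [Pi.single_eq_of_ne ht, mul_zero]
    · intro hj; exact absurd (Finset.mem_univ i) hj
  refine Prod.ext ?_ (Prod.ext ?_ ?_)
  · funext i
    have hv := h (Pi.single i 1, 0, 0)
    rw [binner] at hv
    simp only [Prod.snd_zero, Prod.fst_zero, Pi.zero_apply, mul_zero,
      Finset.sum_const_zero, add_zero] at hv
    rw [comp] at hv
    simpa using hv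
  · funext j
    have hv := h (0, Pi.single j 1, 0)
    rw [binner] at hv
    simp only [Prod.snd_zero, Prod.fst_zero, Pi.zero_apply, mul_zero,
      Finset.sum_const_zero, add_zero, zero_add] at hv
    rw [comp] at hv
    simpa using hv
  · funext j
    have hv := h (0, 0, Pi.single j 1)
    rw [binner] at hv
    simp only [Prod.snd_zero, Prod.fst_zero, Pi.zero_apply, mul_zero,
      Finset.sum_const_zero, add_zero, zero_add] at hv
    rw [comp] at hv
    simpa using hv

lemma bE_inj : Function.Injective (bE (α := α) (β := β)) := by
  rw [injective_iff_map_eq_zero]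
  intro u hu
  refine eq_zero_of_binner u fun v => ?_
  have := congrArg (fun f => f v) hu
  simpa using this


lemma amb_exp (x : Amb α β) : 4 • x = 0 := by
  have h2 : ∀ a : ZMod 2, 4 • a = 0 := by decide
  have h4 : ∀ a : ZMod 4, 4 • a = 0 := by decide
  refine Prod.ext ?_ ?_
  · funext i; rw [Prod.smul_fst, Pi.smul_apply, h2]; rfl
  · funext j; rw [Prod.smul_snd, Pi.smul_apply, h4]; rfl

lemma bin_exp (x : Bin α β) : 2 • x = 0 := by
  have h2 : ∀ a : ZMod 2, 2 • a = 0 := by decide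
  refine Prod.ext ?_ (Prod.ext ?_ ?_)
  · funext i; rw [Prod.smul_fst, Pi.smul_apply, h2]; rfl
  · funext j; rw [Prod.smul_snd, Prod.smul_fst, Pi.smul_apply, h2]; rfl
  · funext j; rw [Prod.smul_snd, Prod.smul_snd, Pi.smul_apply, h2]; rfl

lemma bin_add_self (x : Bin α β) : x + x = 0 := by
  have := bin_exp x
  rwa [two_nsmul] at this

instance : Finite (Amb α β →+ ZMod 4) :=
  Finite.of_injective (fun f => (f : Amb α β → ZMod 4)) DFunLike.coe_injective

instance : Finite (Bin α β →+ ZMod 2) :=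
  Finite.of_injective (fun f => (f : Bin α β → ZMod 2)) DFunLike.coe_injective

lemma zE_bij : Function.Bijective (zE (α := α) (β := β)) := by
  rw [Nat.bijective_iff_injective_and_card]
  exact ⟨zE_inj, (card_addHom_zmod torCard_four (Amb α β) amb_exp).symm⟩

lemma bE_bij : Function.Bijective (bE (α := α) (β := β)) := by
  rw [Nat.bijective_iff_injective_and_card]
  exact ⟨bE_inj, (card_addHom_zmod torCard_two (Bin α β) bin_exp).symm⟩

lemma zinner_symm : ∀ u v : Amb α β, zE u v = zE v u := fun u v => zinner_comm u v
lemma binner_symm : ∀ u v : Bin α β, bE u v = bE v u := fun u v => binner_comm u v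

lemma card_amb_bin : Nat.card (Amb α β) = Nat.card (Bin α β) := by
  simp only [Nat.card_prod, Nat.card_pi]
  simp only [Nat.card_zmod, Finset.prod_const, Finset.card_univ, Fintype.card_fin]
  rw [show (4 : ℕ) = 2 * 2 by norm_num, mul_pow]

/-- Specialization: the `ZMod 4` duality results. -/
lemma zdual_eq (S : Set (Amb α β)) : zdual S = ↑(dualSet zE S) := rfl

lemma bdual_eq (S : Set (Bin α β)) : bdual S = ↑(dualSet bE S) := rfl

lemma zcard (C : AddSubgroup (Amb α β)) :
    Nat.card (dualSet zE (C : Set (Amb α β))) * Nat.card C = Nat.card (Amb α β) :=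
  card_dualSet zE torCard_four zinner_symm zE_bij C

lemma zbidual (C : AddSubgroup (Amb α β)) :
    dualSet zE ((dualSet zE (C : Set (Amb α β)) : AddSubgroup (Amb α β)) : Set (Amb α β)) = C :=
  dualSet_dualSet zE torCard_four zinner_symm zE_bij C

lemma bcard (C : AddSubgroup (Bin α β)) :
    Nat.card (dualSet bE (C : Set (Bin α β))) * Nat.card C = Nat.card (Bin α β) :=
  card_dualSet bE torCard_two binner_symm bE_bij C

-- ===== Gray map algebra =====

lemma gray_add : ∀ x y : ZMod 4, gray x + gray y = gray (x + y + 2 * x * y) := by decide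

lemma gray_inj : Function.Injective gray := by decide

@[simp] lemma gray_zero : gray 0 = 0 := rfl

lemma Phi_zero : Phi (0 : Amb α β) = 0 := by
  refine Prod.ext rfl (Prod.ext ?_ ?_) <;> funext j <;>
    simp [Phi, gray_zero]

lemma Phi_inj : Function.Injective (Phi (α := α) (β := β)) := by
  intro u v huv
  have h1 : u.1 = v.1 := congrArg (fun p : Bin α β => p.1) huv
  have h2 := congrArg (fun p : Bin α β => p.2.1) huv
  have h3 := congrArg (fun p : Bin α β => p.2.2) huv
  refine Prod.ext h1 ?_
  funext j
  exact gray_inj (Prod.ext (congrFun h2 j) (congrFun h3 j))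

lemma star2_comm (u v : Amb α β) : star2 u v = star2 v u := by
  refine Prod.ext rfl ?_
  funext j
  show 2 * u.2 j * v.2 j = 2 * v.2 j * u.2 j
  ring

lemma star2_zero_right (a u v : Amb α β) : star2 a (star2 u v) = 0 := by
  have key : ∀ x y z : ZMod 4, 2 * x * (2 * y * z) = 0 := by decide
  refine Prod.ext rfl ?_
  funext j
  exact key _ _ _

lemma star2_self_zero : star2 (0 : Amb α β) 0 = 0 := by
  refine Prod.ext rfl ?_
  funext j
  show 2 * (0 : ZMod 4) * 0 = 0
  ring

/-- Key identity: `Φ u + Φ v = Φ (u + v + 2u*v)`. -/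
lemma Phi_add (u v : Amb α β) : Phi u + Phi v = Phi (u + v + star2 u v) := by
  refine Prod.ext ?_ (Prod.ext ?_ ?_)
  · show u.1 + v.1 = (u + v + star2 u v).1
    show u.1 + v.1 = u.1 + v.1 + (star2 u v).1
    show u.1 + v.1 = u.1 + v.1 + 0
    rw [add_zero]
  · funext j
    have := congrArg Prod.fst (gray_add (u.2 j) (v.2 j))
    exact this
  · funext j
    have := congrArg Prod.snd (gray_add (u.2 j) (v.2 j))
    exact this

-- ===== transfer of inner products along Phi =====

lemma DD_inj : ∀ a : ZMod 2, DD a = 0 → a = 0 := by decide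

lemma DD_binner (u v : Amb α β) (hs : star2 u v = 0) :
    DD (binner (Phi u) (Phi v)) = zinner u v := by
  have hsp : ∀ j, 2 * u.2 j * v.2 j = 0 := by
    intro j
    have := congrArg (fun p : Amb α β => p.2 j) hs
    exact this
  have key1 : ∀ a b : ZMod 2, DD (a * b) = 2 * c2 a * c2 b := by decide
  have key2 : ∀ x y : ZMod 4, 2 * x * y = 0 →
      DD ((gray x).1 * (gray y).1) + DD ((gray x).2 * (gray y).2) = x * y := by decide
  rw [binner, zinner_eq, map_add, map_add, map_sum, map_sum, map_sum]
  simp only [Phi]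
  rw [Finset.sum_congr rfl fun i (_ : i ∈ univ) => key1 (u.1 i) (v.1 i)]
  rw [add_assoc, ← Finset.sum_add_distrib]
  congr 1
  refine Finset.sum_congr rfl fun j _ => ?_
  exact key2 (u.2 j) (v.2 j) (hsp j)

lemma binner_iff_zinner (u v : Amb α β) (hs : star2 u v = 0) :
    binner (Phi u) (Phi v) = 0 ↔ zinner u v = 0 := by
  constructor
  · intro h
    rw [← DD_binner u v hs, h, map_zero]
  · intro h
    exact DD_inj _ (by rw [DD_binner u v hs, h])

-- ===== zinner of star2 =====

lemma zinner_star_right (w u v : Amb α β) :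
    zinner w (star2 u v) = ∑ j, w.2 j * (2 * u.2 j * v.2 j) := by
  rw [zinner_eq]
  have h1 : (∑ i, 2 * c2 (w.1 i) * c2 ((star2 u v).1 i)) = 0 := by
    refine Finset.sum_eq_zero fun i _ => ?_
    show 2 * c2 (w.1 i) * c2 ((0 : Fin α → ZMod 2) i) = 0
    rw [Pi.zero_apply, c2_zero, mul_zero]
  rw [h1, zero_add]
  rfl

lemma zinner_star_left (u v w : Amb α β) :
    zinner (star2 u v) w = ∑ j, w.2 j * (2 * u.2 j * v.2 j) := by
  rw [zinner_comm, zinner_star_right]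

-- ===== linearity of the Gray image =====

lemma isLinear_addSubgroup (H : AddSubgroup (Bin α β)) : IsLinear (H : Set (Bin α β)) :=
  ⟨AddSubgroup.toZModSubmodule 2 H, rfl⟩

lemma isLinear_bdual (S : Set (Bin α β)) : IsLinear (bdual S) := by
  rw [bdual_eq]
  exact isLinear_addSubgroup _

/-- Closure of a subgroup under the star product. -/
def StarClosed (G : AddSubgroup (Amb α β)) : Prop := ∀ u ∈ G, ∀ v ∈ G, star2 u v ∈ G

/-- The Gray image of a star-closed subgroup, as an additive subgroup. -/
def PhiSub (G : AddSubgroup (Amb α β)) (hG : StarClosed G) : AddSubgroup (Bin α β) where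
  carrier := Phi '' ↑G
  add_mem' := by
    rintro _ _ ⟨u, hu, rfl⟩ ⟨v, hv, rfl⟩
    rw [Phi_add]
    exact ⟨_, G.add_mem (G.add_mem hu hv) (hG u hu v hv), rfl⟩
  zero_mem' := ⟨0, G.zero_mem, Phi_zero⟩
  neg_mem' := by
    rintro _ ⟨u, hu, rfl⟩
    rw [neg_eq_of_add_eq_zero_left (bin_add_self (Phi u))]
    exact ⟨u, hu, rfl⟩

lemma PhiSub_coe (G : AddSubgroup (Amb α β)) (hG : StarClosed G) :
    (PhiSub G hG : Set (Bin α β)) = Phi '' ↑G := rfl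

lemma linear_iff (G : AddSubgroup (Amb α β)) :
    IsLinear (Phi '' (G : Set (Amb α β))) ↔ StarClosed G := by
  constructor
  · rintro ⟨M, hM⟩ u hu v hv
    have hu' : Phi u ∈ (M : Set (Bin α β)) := hM ▸ ⟨u, hu, rfl⟩
    have hv' : Phi v ∈ (M : Set (Bin α β)) := hM ▸ ⟨v, hv, rfl⟩
    have hx : Phi u + Phi v ∈ (M : Set (Bin α β)) := M.add_mem hu' hv'
    rw [hM, Phi_add] at hx
    obtain ⟨w, hw, hweq⟩ := hx
    have : w = u + v + star2 u v := Phi_inj hweq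
    have h' : star2 u v = w - (u + v) := by rw [this]; abel
    rw [h']
    exact G.sub_mem hw (G.add_mem hu hv)
  · intro hG
    exact ⟨AddSubgroup.toZModSubmodule 2 (PhiSub G hG), rfl⟩

-- ===== star-closedness from vanishing D_C =====

lemma starClosed_of_perp (G : AddSubgroup (Amb α β))
    (hG : ∀ u ∈ G, ∀ v ∈ dualSet zE (G : Set (Amb α β)), star2 u v = 0) :
    StarClosed G := by
  intro u hu v hv
  have hmem : star2 u v ∈ dualSet zE
      ((dualSet zE (G : Set (Amb α β)) : AddSubgroup (Amb α β)) : Set (Amb α β)) := by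
    rw [mem_dualSet]
    intro w hw
    rw [zE_apply, zinner_star_right]
    refine Finset.sum_eq_zero fun j _ => ?_
    have h0 : 2 * u.2 j * w.2 j = 0 :=
      congrArg (fun p : Amb α β => p.2 j) (hG u hu w hw)
    calc w.2 j * (2 * u.2 j * v.2 j) = (2 * u.2 j * w.2 j) * v.2 j := by ring
      _ = 0 := by rw [h0, zero_mul]
  rwa [zbidual G] at hmem

lemma starClosed_dual_of_perp (G : AddSubgroup (Amb α β))
    (hG : ∀ u ∈ G, ∀ v ∈ dualSet zE (G : Set (Amb α β)), star2 u v = 0) :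
    StarClosed (dualSet zE (G : Set (Amb α β))) := by
  intro v hv w hw
  rw [mem_dualSet]
  intro u hu
  rw [zE_apply, zinner_star_right]
  refine Finset.sum_eq_zero fun j _ => ?_
  have h0 : 2 * u.2 j * v.2 j = 0 :=
    congrArg (fun p : Amb α β => p.2 j) (hG u hu v hv)
  calc u.2 j * (2 * v.2 j * w.2 j) = (2 * u.2 j * v.2 j) * w.2 j := by ring
    _ = 0 := by rw [h0, zero_mul]

-- ===== the key duality of Gray images =====

lemma phiDual (G : AddSubgroup (Amb α β))
    (hG : ∀ u ∈ G, ∀ v ∈ dualSet zE (G : Set (Amb α β)), star2 u v = 0) :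
    Phi '' ((dualSet zE (G : Set (Amb α β)) : AddSubgroup (Amb α β)) : Set (Amb α β))
      = bdual (Phi '' (G : Set (Amb α β))) := by
  have hSC := starClosed_of_perp G hG
  set D : AddSubgroup (Amb α β) := dualSet zE (G : Set (Amb α β)) with hD
  have hsub : Phi '' (D : Set (Amb α β)) ⊆ bdual (Phi '' (G : Set (Amb α β))) := by
    rintro _ ⟨v, hv, rfl⟩ _ ⟨u, hu, rfl⟩
    exact (binner_iff_zinner u v (hG u hu v hv)).mpr (hv u hu)
  set B : AddSubgroup (Bin α β) := PhiSub G hSC with hB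
  have hBcard : Nat.card B = Nat.card G := by
    rw [← SetLike.coe_sort_coe (p := B), Nat.card_coe_set_eq, PhiSub_coe,
      Set.ncard_image_of_injective _ Phi_inj, ← Nat.card_coe_set_eq,
      SetLike.coe_sort_coe]
  have hDcard : Nat.card D = (Phi '' (D : Set (Amb α β))).ncard := by
    rw [Set.ncard_image_of_injective _ Phi_inj, ← Nat.card_coe_set_eq,
      SetLike.coe_sort_coe]
  have hb := bcard B
  have hz := zcard G
  rw [hBcard] at hb
  rw [card_amb_bin] at hz
  have hDB : Nat.card (dualSet bE (B : Set (Bin α β))) = Nat.card D := by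
    have hGpos : 0 < Nat.card G := Nat.card_pos
    exact Nat.eq_of_mul_eq_mul_right hGpos (hb.trans hz.symm)
  refine Set.eq_of_subset_of_ncard_le hsub ?_ (Set.toFinite _)
  have hbd : bdual (Phi '' (G : Set (Amb α β)))
      = ((dualSet bE (B : Set (Bin α β)) : AddSubgroup (Bin α β)) : Set (Bin α β)) := by
    rw [← PhiSub_coe G hSC, bdual_eq]
  rw [hbd, ← hDcard, ← Nat.card_coe_set_eq, SetLike.coe_sort_coe, hDB]

end ACD

/-- For an ACD code `C`, the six conditions (i)–(vi) are equivalent. -/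
theorem stmt17 {α β : ℕ} (C : AddSubgroup (Amb α β))
    (hACD : ∀ x ∈ C, x ∈ zdual (C : Set (Amb α β)) → x = 0) :
    List.TFAE [
      IsLinear (Phi '' (C : Set (Amb α β))) ∧
        DC (C : Set (Amb α β)) ⊆ (C : Set (Amb α β)),
      IsLinear (Phi '' zdual (C : Set (Amb α β))) ∧
        DC (C : Set (Amb α β)) ⊆ zdual (C : Set (Amb α β)),
      IsLinear (Phi '' (C : Set (Amb α β))) ∧
        IsLinear (Phi '' zdual (C : Set (Amb α β))),
      DC (C : Set (Amb α β)) = {0},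
      (IsLinear (Phi '' (C : Set (Amb α β))) ∧
        ∀ x ∈ Phi '' (C : Set (Amb α β)),
          x ∈ bdual (Phi '' (C : Set (Amb α β))) → x = 0) ∧
      (IsLinear (Phi '' zdual (C : Set (Amb α β))) ∧
        ∀ x ∈ Phi '' zdual (C : Set (Amb α β)),
          x ∈ bdual (Phi '' zdual (C : Set (Amb α β))) → x = 0),
      Phi '' zdual (C : Set (Amb α β)) = bdual (Phi '' (C : Set (Amb α β)))
    ] := by
  classical
  open ACD in
  have hzd : zdual (C : Set (Amb α β))
      = ((dualSet zE (C : Set (Amb α β)) : AddSubgroup (Amb α β)) : Set (Amb α β)) := rfl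
  set D : AddSubgroup (Amb α β) := dualSet zE (C : Set (Amb α β)) with hD
  have hCD : ∀ x ∈ C, x ∈ D → x = 0 := fun x hx hx' => hACD x hx hx'
  -- (iv) in pointwise form
  have h40 : DC (C : Set (Amb α β)) = {0} ↔ ∀ u ∈ C, ∀ v ∈ D, star2 u v = 0 := by
    constructor
    · intro h u hu v hv
      have hm : star2 u v ∈ DC (C : Set (Amb α β)) := ⟨u, hu, v, hv, rfl⟩
      rw [h] at hm
      exact hm
    · intro h
      ext x
      simp only [Set.mem_singleton_iff]
      constructor
      · rintro ⟨u, hu, v, hv, rfl⟩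
        exact h u hu v hv
      · rintro rfl
        exact ⟨0, C.zero_mem, 0, D.zero_mem, star2_self_zero.symm⟩
  -- star2 of C and D lands in D (from star-closedness of C)
  have memD_of_SC : ACD.StarClosed C → ∀ u ∈ C, ∀ v ∈ D, star2 u v ∈ D := by
    intro hSC u hu v hv
    rw [mem_dualSet]
    intro w hw
    rw [zE_apply, zinner_star_right]
    have key : (∑ j, w.2 j * (2 * u.2 j * v.2 j)) = zinner (star2 u w) v := by
      rw [zinner_star_left]
      exact Finset.sum_congr rfl fun j _ => by ring
    rw [key]
    exact (mem_dualSet zE).mp hv _ (hSC u hu w hw)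
  -- star2 of C and D lands in C (from star-closedness of D)
  have memC_of_SD : ACD.StarClosed D → ∀ u ∈ C, ∀ v ∈ D, star2 u v ∈ C := by
    intro hSD u hu v hv
    have hmem : star2 u v ∈ dualSet zE (D : Set (Amb α β)) := by
      rw [mem_dualSet]
      intro w hw
      rw [zE_apply, zinner_star_right]
      have key : (∑ j, w.2 j * (2 * u.2 j * v.2 j)) = zinner u (star2 v w) := by
        rw [zinner_star_right]
        exact Finset.sum_congr rfl fun j _ => by ring
      rw [key]
      exact (mem_dualSet zE).mp (hSD v hv w hw) u hu
    rw [hD, zbidual C] at hmem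
    exact hmem
  tfae_have 1 → 4 := by
    rintro ⟨hlin, hsub⟩
    have hSC := (linear_iff C).mp hlin
    rw [h40]
    intro u hu v hv
    exact hCD _ (hsub ⟨u, hu, v, hv, rfl⟩) (memD_of_SC hSC u hu v hv)
  tfae_have 2 → 4 := by
    rintro ⟨hlin, hsub⟩
    rw [hzd] at hlin
    have hSD := (linear_iff D).mp hlin
    rw [h40]
    intro u hu v hv
    have hdD : star2 u v ∈ D := by
      have := hsub ⟨u, hu, v, hv, rfl⟩
      rwa [hzd] at this
    exact hCD _ (memC_of_SD hSD u hu v hv) hdD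
  tfae_have 3 → 4 := by
    rintro ⟨hlinC, hlinD⟩
    have hSC := (linear_iff C).mp hlinC
    rw [hzd] at hlinD
    have hSD := (linear_iff D).mp hlinD
    rw [h40]
    intro u hu v hv
    exact hCD _ (memC_of_SD hSD u hu v hv) (memD_of_SC hSC u hu v hv)
  tfae_have 4 → 1 := by
    intro h4
    have hpt := h40.mp h4
    refine ⟨(linear_iff C).mpr (starClosed_of_perp C hpt), ?_⟩
    intro x hx
    rw [h4] at hx
    rw [Set.mem_singleton_iff] at hx
    subst hx
    exact C.zero_mem
  tfae_have 4 → 2 := by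
    intro h4
    have hpt := h40.mp h4
    refine ⟨?_, ?_⟩
    · rw [hzd]
      exact (linear_iff D).mpr (starClosed_dual_of_perp C hpt)
    · intro x hx
      rw [h4] at hx
      rw [Set.mem_singleton_iff] at hx
      subst hx
      rw [hzd]
      exact D.zero_mem
  tfae_have 4 → 3 := by
    intro h4
    have hpt := h40.mp h4
    refine ⟨(linear_iff C).mpr (starClosed_of_perp C hpt), ?_⟩
    rw [hzd]
    exact (linear_iff D).mpr (starClosed_dual_of_perp C hpt)
  tfae_have 4 → 6 := by
    intro h4
    have hpt := h40.mp h4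
    rw [hzd]
    exact phiDual C hpt
  tfae_have 4 → 5 := by
    intro h4
    have hpt := h40.mp h4
    have h6 : Phi '' (D : Set (Amb α β)) = bdual (Phi '' (C : Set (Amb α β))) :=
      phiDual C hpt
    have hptD : ∀ u ∈ D, ∀ v ∈ dualSet zE (D : Set (Amb α β)), star2 u v = 0 := by
      intro u hu v hv
      rw [hD, zbidual C] at hv
      rw [star2_comm]
      exact hpt v hv u hu
    have h6' : Phi '' ((dualSet zE (D : Set (Amb α β)) : AddSubgroup (Amb α β)) : Set (Amb α β))
        = bdual (Phi '' (D : Set (Amb α β))) := phiDual D hptD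
    rw [hD, zbidual C, ← hD] at h6'
    refine ⟨⟨(linear_iff C).mpr (starClosed_of_perp C hpt), ?_⟩,
      ⟨by rw [hzd]; exact (linear_iff D).mpr (starClosed_dual_of_perp C hpt), ?_⟩⟩
    · intro x hx hxd
      rw [← h6] at hxd
      obtain ⟨u, hu, rfl⟩ := hx
      obtain ⟨v, hv, hveq⟩ := hxd
      have huv : v = u := Phi_inj hveq
      subst huv
      rw [hCD v hu hv, Phi_zero]
    · intro x hx hxd
      rw [hzd] at hx hxd
      rw [← h6'] at hxd
      obtain ⟨u, hu, rfl⟩ := hx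
      obtain ⟨v, hv, hveq⟩ := hxd
      have huv : v = u := Phi_inj hveq
      subst huv
      rw [hCD v hv hu, Phi_zero]
  tfae_have 5 → 3 := by
    rintro ⟨⟨l1, _⟩, ⟨l2, _⟩⟩
    exact ⟨l1, l2⟩
  tfae_have 6 → 3 := by
    intro h6
    have hlinD : IsLinear (Phi '' zdual (C : Set (Amb α β))) := by
      rw [h6]
      exact isLinear_bdual _
    set T : AddSubgroup (Bin α β) := dualSet bE (Phi '' (C : Set (Amb α β))) with hT
    have h6T : Phi '' zdual (C : Set (Amb α β)) = (T : Set (Bin α β)) := by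
      rw [h6, hT, bdual_eq]
    have hsub : Phi '' (C : Set (Amb α β)) ⊆ bdual (Phi '' zdual (C : Set (Amb α β))) := by
      rintro _ ⟨u, hu, rfl⟩ y hy
      have hy' : y ∈ bdual (Phi '' (C : Set (Amb α β))) := by rw [← h6]; exact hy
      rw [binner_comm]
      exact hy' _ ⟨u, hu, rfl⟩
    -- counting
    have hTcard : Nat.card T = Nat.card D := by
      rw [← SetLike.coe_sort_coe (p := T), Nat.card_coe_set_eq, ← h6T, hzd,
        Set.ncard_image_of_injective _ Phi_inj, ← Nat.card_coe_set_eq,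
        SetLike.coe_sort_coe]
    have hb := bcard T
    have hz := zcard C
    rw [hTcard] at hb
    rw [card_amb_bin, ← hD] at hz
    have hDT : Nat.card (dualSet bE (T : Set (Bin α β))) = Nat.card C := by
      have hne : Nonempty ↥D := ⟨⟨0, D.zero_mem⟩⟩
      have hDpos : 0 < Nat.card D := Nat.card_pos
      have h1 : Nat.card (dualSet bE (T : Set (Bin α β))) * Nat.card D
          = Nat.card C * Nat.card D := by
        rw [hb, mul_comm (Nat.card ↥C), hz]
      exact Nat.eq_of_mul_eq_mul_right hDpos h1
    have hset : Phi '' (C : Set (Amb α β)) = bdual (Phi '' zdual (C : Set (Amb α β))) := by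
      refine Set.eq_of_subset_of_ncard_le hsub ?_ (Set.toFinite _)
      have hbd : bdual (Phi '' zdual (C : Set (Amb α β)))
          = ((dualSet bE (T : Set (Bin α β)) : AddSubgroup (Bin α β)) : Set (Bin α β)) := by
        rw [h6T, bdual_eq]
      rw [hbd, ← Nat.card_coe_set_eq, SetLike.coe_sort_coe, hDT,
        Set.ncard_image_of_injective _ Phi_inj, ← Nat.card_coe_set_eq,
        SetLike.coe_sort_coe]
    refine ⟨?_, hlinD⟩
    rw [hset]
    exact isLinear_bdual _
  tfae_finish
end

section
/- Let C be a Z2Z4-additive code of type (α,δ;0,δ;0) generated by the rows of (G_X | I_δ), where G_X is any δ×α binary matrix and I_δ is the identity over Z4. Then Φ(C) is a binary LCD code. -/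
open Finset

/-! Since `(0 | 2eᵢ) = 2(gᵢ | eᵢ)` lies in `C`, the code contains every `2u*v`, and the identity
`Φ(u) + Φ(v) = Φ(u + v + 2u*v)` makes `Φ(C)` linear. Let `w ∈ C` with `Φ(w) ∈ Φ(C)⊥`. Pairing with
`Φ(0 | 2eᵢ) = (0 | eᵢ | eᵢ)` shows that every `w'ᵢ` is even. Every codeword satisfies
`w_X = (w' mod 2) G_X`, so `w_X = 0`, and then pairing with `Φ(gᵢ | eᵢ) = (gᵢ | 0 | eᵢ)` kills the
second Gray bit of `w'ᵢ`, forcing `w' = 0`. -/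

open Matrix

def toZMod2 : ZMod 4 →+* ZMod 2 := ZMod.castHom (by norm_num) _

lemma gray_add_add_two_mul (a b : ZMod 4) : gray (a + b + 2 * a * b) = gray a + gray b := by
  revert a b; decide

lemma gray_fst_add_snd (a : ZMod 4) : (gray a).1 + (gray a).2 = toZMod2 a := by
  revert a; decide

lemma eq_zero_of_toZMod2_eq_zero_of_gray_snd_eq_zero {a : ZMod 4} (h₂ : toZMod2 a = 0)
    (hg : (gray a).2 = 0) : a = 0 := by
  revert a; decide

section Gray

variable {α β : ℕ}

lemma Phi_add_add_star2 (u v : Amb α β) : Phi (u + v + star2 u v) = Phi u + Phi v := by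
  ext j
  · simp [Phi, star2]
  · simp [Phi, star2, gray_add_add_two_mul]
  · simp [Phi, star2, gray_add_add_two_mul]

lemma Phi_mk_single (g : Fin α → ZMod 2) (i : Fin β) (a : ZMod 4) :
    Phi ((g, Pi.single i a) : Amb α β) = (g, Pi.single i (gray a).1, Pi.single i (gray a).2) := by
  refine Prod.ext rfl (Prod.ext ?_ ?_)
  · exact (Pi.single_op (fun _ b => (gray b).1) (fun _ => rfl) i a).symm
  · exact (Pi.single_op (fun _ b => (gray b).2) (fun _ => rfl) i a).symm

lemma binner_Phi_mk_single (g : Fin α → ZMod 2) (i : Fin β) (a : ZMod 4) (w : Amb α β) :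
    binner (Phi ((g, Pi.single i a) : Amb α β)) (Phi w) =
      g ⬝ᵥ w.1 + (gray a).1 * (gray (w.2 i)).1 + (gray a).2 * (gray (w.2 i)).2 := by
  rw [Phi_mk_single]
  change g ⬝ᵥ w.1 + Pi.single i _ ⬝ᵥ _ + Pi.single i _ ⬝ᵥ _ = _
  rw [single_dotProduct, single_dotProduct]
  rfl

lemma star2_eq_sum (u v : Amb α β) :
    star2 u v = ∑ j, (u.2 j * v.2 j).val • ((0, Pi.single j 2) : Amb α β) := by
  ext k
  · simp [star2, Prod.fst_sum]
  · simp only [star2, Prod.smul_mk, nsmul_zero, Prod.snd_sum, Finset.sum_apply, Pi.smul_apply,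
      Pi.single_apply, smul_ite, sum_ite_eq, mem_univ, ↓reduceIte]
    rw [nsmul_eq_mul, ZMod.natCast_zmod_val]
    ring

lemma star2_mem {C : AddSubgroup (Amb α β)} (hC : ∀ i, ((0, Pi.single i 2) : Amb α β) ∈ C)
    (u v : Amb α β) : star2 u v ∈ C := by
  rw [star2_eq_sum]
  exact sum_mem fun j _ => nsmul_mem (hC j) _

lemma isLinear_image_Phi {C : AddSubgroup (Amb α β)}
    (hC : ∀ u ∈ C, ∀ v ∈ C, star2 u v ∈ C) : IsLinear (Phi '' (C : Set (Amb α β))) := by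
  refine ⟨{ carrier := Phi '' C
            add_mem' := ?_
            zero_mem' := ⟨0, C.zero_mem, rfl⟩
            smul_mem' := ?_ }, rfl⟩
  · rintro _ _ ⟨u, hu, rfl⟩ ⟨v, hv, rfl⟩
    exact ⟨_, add_mem (add_mem hu hv) (hC u hu v hv), Phi_add_add_star2 u v⟩
  · intro c x hx
    rcases (by decide : ∀ c : ZMod 2, c = 0 ∨ c = 1) c with rfl | rfl
    · rw [zero_smul]; exact ⟨0, C.zero_mem, rfl⟩
    · rwa [one_smul]

end Gray

section Generators

variable {α δ : ℕ} (GX : Matrix (Fin δ) (Fin α) (ZMod 2))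

lemma fst_eq_vecMul_of_mem_closure {w : Amb α δ}
    (hw : w ∈ AddSubgroup.closure (Set.range fun i => ((GX i, Pi.single i 1) : Amb α δ))) :
    w.1 = (fun i => toZMod2 (w.2 i)) ᵥ* GX := by
  induction hw using AddSubgroup.closure_induction with
  | mem x hx =>
    obtain ⟨i, rfl⟩ := hx
    rw [← Pi.single_op (fun _ => toZMod2) (fun _ => map_zero _), map_one, single_one_vecMul]
    rfl
  | zero => exact (zero_vecMul GX).symm
  | add x y _ _ hx hy =>
    rw [Prod.fst_add, hx, hy, ← add_vecMul]
    congr 1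
    ext i
    simp
  | neg x _ hx =>
    rw [Prod.fst_neg, hx, ← neg_vecMul]
    congr 1
    ext i
    simp [CharTwo.neg_eq]

variable {GX} {C : AddSubgroup (Amb α δ)}

lemma zero_single_two_mem (hgen : ∀ i, ((GX i, Pi.single i 1) : Amb α δ) ∈ C) (i : Fin δ) :
    ((0, Pi.single i 2) : Amb α δ) ∈ C := by
  convert add_mem (hgen i) (hgen i) using 1
  ext j
  · simp [CharTwo.add_self_eq_zero]
  · rw [Prod.snd_add, ← Pi.single_add, one_add_one_eq_two]

lemma eq_zero_of_Phi_mem_bdual (hgen : ∀ i, ((GX i, Pi.single i 1) : Amb α δ) ∈ C)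
    {w : Amb α δ} (hw : w.1 = (fun i => toZMod2 (w.2 i)) ᵥ* GX)
    (hdual : Phi w ∈ bdual (Phi '' (C : Set (Amb α δ)))) : w = 0 := by
  have hred (i : Fin δ) : toZMod2 (w.2 i) = 0 := by
    have h := hdual _ ⟨_, zero_single_two_mem hgen i, rfl⟩
    rw [binner_Phi_mk_single, show gray 2 = (1, 1) from rfl] at h
    simpa [gray_fst_add_snd] using h
  have hw1 : w.1 = 0 := by
    simp [hw, hred, ← Pi.zero_def]
  have hsnd (i : Fin δ) : (gray (w.2 i)).2 = 0 := by
    have h := hdual _ ⟨_, hgen i, rfl⟩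
    rw [binner_Phi_mk_single, show gray 1 = (0, 1) from rfl, hw1] at h
    simpa using h
  exact Prod.ext hw1
    (funext fun i => eq_zero_of_toZMod2_eq_zero_of_gray_snd_eq_zero (hred i) (hsnd i))

end Generators

/-- If `C` is generated by the rows of `(G_X | I_δ)` for an arbitrary
binary matrix `G_X`, then `Φ(C)` is a binary LCD code. -/
theorem stmt18 {α δ : ℕ} (GX : Matrix (Fin δ) (Fin α) (ZMod 2))
    (C : AddSubgroup (Amb α δ))
    (hC : C = AddSubgroup.closure (Set.range fun i =>
      ((GX i, fun j => if j = i then (1 : ZMod 4) else 0) : Amb α δ))) :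
    IsLinear (Phi '' (C : Set (Amb α δ))) ∧
    (∀ x ∈ Phi '' (C : Set (Amb α δ)),
      x ∈ bdual (Phi '' (C : Set (Amb α δ))) → x = 0) := by
  have hrows : (fun i => ((GX i, fun j => if j = i then (1 : ZMod 4) else 0) : Amb α δ)) =
      fun i => (GX i, Pi.single i 1) := by
    ext i j <;> simp [Pi.single_apply]
  rw [hrows] at hC
  subst hC
  have hgen (i : Fin δ) : ((GX i, Pi.single i 1) : Amb α δ) ∈ AddSubgroup.closure
      (Set.range fun i => ((GX i, Pi.single i 1) : Amb α δ)) :=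
    AddSubgroup.subset_closure ⟨i, rfl⟩
  refine ⟨isLinear_image_Phi fun u _ v _ => star2_mem (zero_single_two_mem hgen) u v, ?_⟩
  rintro _ ⟨w, hw, rfl⟩ hdual
  rw [eq_zero_of_Phi_mem_bdual hgen (fst_eq_vecMul_of_mem_closure GX hw) hdual]
  rfl
end

section
/- Let C be a Z2Z4-additive code of type (α,β;γ,δ;κ) with δ ≠ 0 such that C_Y (the projection onto the quaternary coordinates) is self-orthogonal. Then C is not an ACD code; specifically, there exists a nonzero element of C ∩ C⊥. -/
open Finset

/-- If `C` has an element of order 4 (`δ ≠ 0`) and its quaternary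
projection `C_Y` is self-orthogonal, then `C` is not ACD: some nonzero element lies
in `C ∩ C⊥`. -/
theorem stmt19 {α β : ℕ} (C : AddSubgroup (Amb α β))
    (hso : ∀ u ∈ C, ∀ v ∈ C, ∑ j, u.2 j * v.2 j = (0 : ZMod 4))
    (hδ : ∃ w ∈ C, addOrderOf w = 4) :
    ∃ x ∈ C, x ∈ zdual (C : Set (Amb α β)) ∧ x ≠ 0 := by
  obtain ⟨w, hw, hord⟩ := hδ
  refine ⟨w + w, C.add_mem hw hw, ?_, ?_⟩
  · intro u hu
    have h1 : (w + w).1 = 0 := by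
      funext i
      show w.1 i + w.1 i = 0
      exact CharTwo.add_self_eq_zero _
    have h2 : ∑ j, u.2 j * (w + w).2 j = 2 * ∑ j, u.2 j * w.2 j := by
      rw [Finset.mul_sum]
      refine Finset.sum_congr rfl fun j _ => ?_
      show u.2 j * (w.2 j + w.2 j) = _
      ring
    unfold zinner
    rw [h1, h2, hso u hu w hw]
    simp
  · intro h
    have h2 : (2 : ℕ) • w = 0 := by
      rw [two_nsmul]; exact h
    have := addOrderOf_dvd_of_nsmul_eq_zero h2
    rw [hord] at this
    omega
end
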